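/- Let A, B ∈ ℝ^{d×d} be symmetric matrices, and let U, U' ∈ ℝ^{d×M} have columns equal to orthonormal eigenvectors corresponding to the M largest eigenvalues of A and B respectively. Suppose the M-th largest eigenvalue of B is strictly greater than its (M+1)-th largest eigenvalue by a gap δ > 0. Then ‖UU^T − U'U'^T‖_F ≤ (2√2 / δ)·‖A − B‖_F. -/
import Mathlib

open Matrix Finset

/-- Squared Frobenius norm of a matrix. -/
noncomputable def frob2 {m n : ℕ} (A : Matrix (Fin m) (Fin n) ℝ) : ℝ :=
  ∑ i, ∑ j, (A i j) ^ 2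

/-- indicator of the first `M` coordinates -/
def chi (M : ℕ) {d : ℕ} (i : Fin d) : ℝ := if (i : ℕ) < M then 1 else 0

lemma chi_nonneg (M : ℕ) {d : ℕ} (i : Fin d) : 0 ≤ chi M i := by
  unfold chi; split <;> norm_num

lemma chi_le_one (M : ℕ) {d : ℕ} (i : Fin d) : chi M i ≤ 1 := by
  unfold chi; split <;> norm_num

lemma chi_mul_self (M : ℕ) {d : ℕ} (i : Fin d) : chi M i * chi M i = chi M i := by
  unfold chi; split <;> norm_num

lemma dk_cyc {d : ℕ} (X Y : Matrix (Fin d) (Fin d) ℝ) (a b : Fin d → ℝ) :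
    Matrix.trace ((X * Matrix.diagonal a * Xᵀ) * (Y * Matrix.diagonal b * Yᵀ)) =
    Matrix.trace (Matrix.diagonal a * (Xᵀ * Y) * Matrix.diagonal b * (Xᵀ * Y)ᵀ) := by
  rw [Matrix.transpose_mul, Matrix.transpose_transpose]
  have h : (X * Matrix.diagonal a * Xᵀ) * (Y * Matrix.diagonal b * Yᵀ)
      = X * (Matrix.diagonal a * (Xᵀ * Y) * Matrix.diagonal b * Yᵀ) := by
    simp only [Matrix.mul_assoc]
  rw [h, Matrix.trace_mul_comm]
  simp only [Matrix.mul_assoc]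

lemma dk_diagTrace {d : ℕ} (a b : Fin d → ℝ) (G : Matrix (Fin d) (Fin d) ℝ) :
    Matrix.trace (Matrix.diagonal a * G * Matrix.diagonal b * Gᵀ)
      = ∑ i, ∑ j, a i * b j * (G i j)^2 := by
  simp [Matrix.trace, Matrix.diag, Matrix.mul_apply, Matrix.diagonal_apply, Finset.mul_sum,
    Finset.sum_mul, ite_mul, mul_ite, sq]
  apply Finset.sum_congr rfl; intro i _; apply Finset.sum_congr rfl; intro j _; ring

lemma dk_sum_cast {d M : ℕ} (hM : 0 < M) (hMd : M ≤ d) (f : Fin d → ℝ) :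
    (∑ k : Fin M, f (Fin.castLE hMd k))
      = ∑ k : Fin d, (if (k : ℕ) < M then f k else 0) := by
  rw [← Finset.sum_filter]
  apply Finset.sum_nbij' (fun k => Fin.castLE hMd k)
    (fun k => ⟨(k:ℕ) % M, Nat.mod_lt _ hM⟩)
  · intro a _; simp
  · intro a ha; simp at ha ⊢
  · intro a _; ext; simp [Nat.mod_eq_of_lt a.isLt]
  · intro a ha; simp at ha; ext; simp [Nat.mod_eq_of_lt ha]
  · intro a _; rfl

lemma dk_rows {d M : ℕ} (s : Fin d → Fin d → ℝ) (hrow : ∀ i, ∑ j, s i j = 1) :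
    ∑ i, ∑ j, chi M i * (1 - chi M j) * s i j
      = (∑ i : Fin d, chi M i) - ∑ i, ∑ j, chi M i * chi M j * s i j := by
  rw [← Finset.sum_sub_distrib]
  apply Finset.sum_congr rfl; intro i _
  have : ∑ j, chi M i * (1 - chi M j) * s i j
      = ∑ j, (chi M i * s i j - chi M i * chi M j * s i j) := by
    apply Finset.sum_congr rfl; intro j _; ring
  rw [this, Finset.sum_sub_distrib, ← Finset.mul_sum, hrow i, mul_one]

lemma dk_cols {d M : ℕ} (s : Fin d → Fin d → ℝ) (hcol : ∀ j, ∑ i, s i j = 1) :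
    ∑ i, ∑ j, (1 - chi M i) * chi M j * s i j
      = (∑ j : Fin d, chi M j) - ∑ i, ∑ j, chi M i * chi M j * s i j := by
  rw [Finset.sum_comm]
  rw [show (∑ i, ∑ j, chi M i * chi M j * s i j) = ∑ j, ∑ i, chi M i * chi M j * s i j from
    Finset.sum_comm]
  rw [← Finset.sum_sub_distrib]
  apply Finset.sum_congr rfl; intro j _
  have : ∑ i, (1 - chi M i) * chi M j * s i j
      = ∑ i, (chi M j * s i j - chi M i * chi M j * s i j) := by
    apply Finset.sum_congr rfl; intro i _; ring
  rw [this, Finset.sum_sub_distrib, ← Finset.mul_sum, hcol j, mul_one]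

/-- Key scalar eigenvalue inequality. -/
lemma dk_key {d M : ℕ} (hM1 : 1 ≤ M) (hMd : M < d) (ρ : Fin d → ℝ) (hρ : Antitone ρ)
    (s : Fin d → Fin d → ℝ) (hs : ∀ i j, 0 ≤ s i j)
    (hrow : ∀ i, ∑ j, s i j = 1) (hcol : ∀ j, ∑ i, s i j = 1) :
    (ρ ⟨M - 1, lt_trans (Nat.sub_lt hM1 one_pos) hMd⟩ - ρ ⟨M, hMd⟩) *
        (∑ i, ∑ j, chi M i * (1 - chi M j) * s i j)
      ≤ (∑ i, ρ i * chi M i) - ∑ i, ∑ j, ρ i * chi M j * s i j := by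
  set ρ1 := ρ ⟨M - 1, lt_trans (Nat.sub_lt hM1 one_pos) hMd⟩ with hρ1
  set ρ2 := ρ ⟨M, hMd⟩ with hρ2
  have htt : ∑ i, ∑ j, chi M i * (1 - chi M j) * s i j
      = ∑ i, ∑ j, (1 - chi M i) * chi M j * s i j := by
    rw [dk_rows s hrow, dk_cols s hcol]
  -- rewrite the RHS as one double sum
  have hexp : (∑ i, ρ i * chi M i) - (∑ i, ∑ j, ρ i * chi M j * s i j)
      = ∑ i, ∑ j, (ρ i * chi M i * s i j - ρ i * chi M j * s i j) := by
    rw [← Finset.sum_sub_distrib]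
    apply Finset.sum_congr rfl; intro i _
    rw [Finset.sum_sub_distrib, ← Finset.mul_sum, hrow i, mul_one]
  have hterm : ∀ i j, ρ1 * (chi M i * (1 - chi M j) * s i j)
        - ρ2 * ((1 - chi M i) * chi M j * s i j)
      ≤ ρ i * chi M i * s i j - ρ i * chi M j * s i j := by
    intro i j
    have hsij := hs i j
    unfold chi
    by_cases hi : (i : ℕ) < M <;> by_cases hj : (j : ℕ) < M <;> simp [hi, hj]
    · -- i < M, j ≥ M : need ρ1 * s ≤ ρ i * s
      have : ρ1 ≤ ρ i := by
        rw [hρ1]; apply hρ; show (i : ℕ) ≤ M - 1; omega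
      nlinarith
    · -- i ≥ M, j < M : need -(ρ2 * s) ≤ -(ρ i * s), i.e. ρ i ≤ ρ2
      have : ρ i ≤ ρ2 := by
        rw [hρ2]; apply hρ; show M ≤ (i : ℕ); omega
      nlinarith
  calc (ρ1 - ρ2) * (∑ i, ∑ j, chi M i * (1 - chi M j) * s i j)
      = ρ1 * (∑ i, ∑ j, chi M i * (1 - chi M j) * s i j)
        - ρ2 * (∑ i, ∑ j, (1 - chi M i) * chi M j * s i j) := by
        rw [← htt]; ring
    _ = ∑ i, ∑ j, (ρ1 * (chi M i * (1 - chi M j) * s i j)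
        - ρ2 * ((1 - chi M i) * chi M j * s i j)) := by
        simp only [Finset.mul_sum, ← Finset.sum_sub_distrib]
    _ ≤ ∑ i, ∑ j, (ρ i * chi M i * s i j - ρ i * chi M j * s i j) := by
        apply Finset.sum_le_sum; intro i _; apply Finset.sum_le_sum; intro j _
        exact hterm i j
    _ = _ := hexp.symm

lemma dk_frob2_nonneg {m n : ℕ} (X : Matrix (Fin m) (Fin n) ℝ) : 0 ≤ frob2 X := by
  unfold frob2
  exact Finset.sum_nonneg fun i _ => Finset.sum_nonneg fun j _ => sq_nonneg _

lemma dk_frob2_trace {d : ℕ} (X : Matrix (Fin d) (Fin d) ℝ) (hX : Xᵀ = X) :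
    frob2 X = Matrix.trace (X * X) := by
  unfold frob2
  simp only [Matrix.trace, Matrix.diag, Matrix.mul_apply]
  apply Finset.sum_congr rfl; intro i _; apply Finset.sum_congr rfl; intro j _
  have h2 : X j i = X i j :=
    ((congrFun (congrFun hX j) i).symm).trans (X.transpose_apply j i)
  rw [h2, sq]

lemma dk_trace_symm {d : ℕ} (X Y : Matrix (Fin d) (Fin d) ℝ) (hY : Yᵀ = Y) :
    Matrix.trace (X * Y) = ∑ i, ∑ j, X i j * Y i j := by
  simp only [Matrix.trace, Matrix.diag, Matrix.mul_apply]
  apply Finset.sum_congr rfl; intro i _; apply Finset.sum_congr rfl; intro j _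
  have h2 : Y j i = Y i j :=
    ((congrFun (congrFun hY j) i).symm).trans (Y.transpose_apply j i)
  rw [h2]

lemma dk_cs {d : ℕ} (X Y : Matrix (Fin d) (Fin d) ℝ) :
    (∑ i, ∑ j, X i j * Y i j)^2 ≤ frob2 X * frob2 Y := by
  have h := Finset.sum_mul_sq_le_sq_mul_sq (Finset.univ ×ˢ Finset.univ)
    (fun p : Fin d × Fin d => X p.1 p.2) (fun p : Fin d × Fin d => Y p.1 p.2)
  simp only [Finset.sum_product] at h
  simpa [frob2] using h
set_option maxHeartbeats 1000000 in
/-- Davis–Kahan (Yu–Wang–Samworth form): if `A = V diag(ν) Vᵀ` and `B = W diag(μ) Wᵀ`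
are symmetric with eigenvalues in decreasing order, `U, U'` consist of the first `M`
columns of `V, W` (eigenvectors of the `M` largest eigenvalues), and
`δ = μ_M − μ_{M+1} > 0`, then `‖UUᵀ − U'U'ᵀ‖_F ≤ (2√2/δ) ‖A − B‖_F`. -/
theorem davis_kahan (d M : ℕ) (hM1 : 1 ≤ M) (hMd : M < d)
    (A B V W : Matrix (Fin d) (Fin d) ℝ) (ν μ : Fin d → ℝ)
    (hV : Vᵀ * V = 1) (hV' : V * Vᵀ = 1)
    (hW : Wᵀ * W = 1) (hW' : W * Wᵀ = 1)
    (hν : Antitone ν) (hμ : Antitone μ)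
    (hA : A = V * Matrix.diagonal ν * Vᵀ)
    (hB : B = W * Matrix.diagonal μ * Wᵀ)
    (hgap : 0 < μ ⟨M - 1, lt_trans (Nat.sub_lt hM1 one_pos) hMd⟩ - μ ⟨M, hMd⟩) :
    Real.sqrt (frob2
        (V.submatrix id (Fin.castLE hMd.le) * (V.submatrix id (Fin.castLE hMd.le))ᵀ -
         W.submatrix id (Fin.castLE hMd.le) * (W.submatrix id (Fin.castLE hMd.le))ᵀ))
      ≤ (2 * Real.sqrt 2 /
          (μ ⟨M - 1, lt_trans (Nat.sub_lt hM1 one_pos) hMd⟩ - μ ⟨M, hMd⟩)) *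
        Real.sqrt (frob2 (A - B)) := by
  set δ := μ ⟨M - 1, lt_trans (Nat.sub_lt hM1 one_pos) hMd⟩ - μ ⟨M, hMd⟩ with hδ
  set P := V * Matrix.diagonal (chi (d := d) M) * Vᵀ with hP
  set Q := W * Matrix.diagonal (chi (d := d) M) * Wᵀ with hQ
  set G := Vᵀ * W with hG
  -- the projectors
  have hUU : V.submatrix id (Fin.castLE hMd.le) * (V.submatrix id (Fin.castLE hMd.le))ᵀ = P := by
    ext i j
    rw [hP]
    simp only [Matrix.mul_apply, Matrix.transpose_apply, Matrix.submatrix_apply, id_eq,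
      Matrix.mul_diagonal, Matrix.diagonal_apply]
    rw [dk_sum_cast hM1 hMd.le (fun k => V i k * V j k)]
    apply Finset.sum_congr rfl; intro k _
    unfold chi; by_cases h : (k : ℕ) < M <;> simp [h]
  have hWW : W.submatrix id (Fin.castLE hMd.le) * (W.submatrix id (Fin.castLE hMd.le))ᵀ = Q := by
    ext i j
    rw [hQ]
    simp only [Matrix.mul_apply, Matrix.transpose_apply, Matrix.submatrix_apply, id_eq,
      Matrix.mul_diagonal, Matrix.diagonal_apply]
    rw [dk_sum_cast hM1 hMd.le (fun k => W i k * W j k)]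
    apply Finset.sum_congr rfl; intro k _
    unfold chi; by_cases h : (k : ℕ) < M <;> simp [h]
  rw [hUU, hWW]
  -- orthogonality of G
  have hGGt : G * Gᵀ = 1 := by
    rw [hG, Matrix.transpose_mul, Matrix.transpose_transpose, Matrix.mul_assoc,
      ← Matrix.mul_assoc W, hW', Matrix.one_mul, hV]
  have hGtG : Gᵀ * G = 1 := by
    rw [hG, Matrix.transpose_mul, Matrix.transpose_transpose, Matrix.mul_assoc,
      ← Matrix.mul_assoc V, hV', Matrix.one_mul, hW]
  have hrow : ∀ i, ∑ j, (G i j)^2 = 1 := by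
    intro i
    have h := congrFun (congrFun hGGt i) i
    simpa [Matrix.mul_apply, Matrix.one_apply, sq] using h
  have hcol : ∀ j, ∑ i, (G i j)^2 = 1 := by
    intro j
    have h := congrFun (congrFun hGtG j) j
    simp only [Matrix.mul_apply, Matrix.transpose_apply, Matrix.one_apply_eq] at h
    calc ∑ i, (G i j)^2 = ∑ i, G i j * G i j := by
          apply Finset.sum_congr rfl; intro i _; rw [sq]
      _ = 1 := h
  have hrow' : ∀ i, ∑ j, (G j i)^2 = 1 := fun i => hcol i
  have hcol' : ∀ j, ∑ i, (G j i)^2 = 1 := fun j => hrow j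
  -- trace identities
  have trPQ : Matrix.trace (P * Q) = ∑ i, ∑ j, chi M i * chi M j * (G i j)^2 := by
    rw [hP, hQ, dk_cyc, ← hG, dk_diagTrace]
  have trAQ : Matrix.trace (A * Q) = ∑ i, ∑ j, ν i * chi M j * (G i j)^2 := by
    rw [hA, hQ, dk_cyc, ← hG, dk_diagTrace]
  have hWtV : ∀ i j, (Wᵀ * V) i j = G j i := by
    intro i j
    rw [hG]
    simp [Matrix.mul_apply, Matrix.transpose_apply, mul_comm]
  have trBP : Matrix.trace (B * P) = ∑ i, ∑ j, μ i * chi M j * (G j i)^2 := by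
    rw [hB, hP, dk_cyc, dk_diagTrace]
    apply Finset.sum_congr rfl; intro i _; apply Finset.sum_congr rfl; intro j _
    rw [hWtV]
  have trAP : Matrix.trace (A * P) = ∑ i, ν i * chi M i := by
    rw [hA, hP, dk_cyc, hV, dk_diagTrace]
    simp [Matrix.one_apply]
  have trBQ : Matrix.trace (B * Q) = ∑ i, μ i * chi M i := by
    rw [hB, hQ, dk_cyc, hW, dk_diagTrace]
    simp [Matrix.one_apply]
  have trPP : Matrix.trace (P * P) = ∑ i : Fin d, chi M i := by
    rw [hP, dk_cyc, hV, dk_diagTrace]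
    simp only [Matrix.one_apply]
    have h1 : ∀ i : Fin d, (∑ j, chi M i * chi M j * (if i = j then (1:ℝ) else 0)^2)
        = chi M i := by
      intro i
      rw [Finset.sum_eq_single i]
      · rw [if_pos rfl, one_pow, mul_one, chi_mul_self]
      · intro b _ hb; rw [if_neg (Ne.symm hb)]; ring
      · intro hi; exact absurd (Finset.mem_univ i) hi
    exact Finset.sum_congr rfl fun i _ => h1 i
  have trQQ : Matrix.trace (Q * Q) = ∑ i : Fin d, chi M i := by
    rw [hQ, dk_cyc, hW, dk_diagTrace]
    simp only [Matrix.one_apply]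
    have h1 : ∀ i : Fin d, (∑ j, chi M i * chi M j * (if i = j then (1:ℝ) else 0)^2)
        = chi M i := by
      intro i
      rw [Finset.sum_eq_single i]
      · rw [if_pos rfl, one_pow, mul_one, chi_mul_self]
      · intro b _ hb; rw [if_neg (Ne.symm hb)]; ring
      · intro hi; exact absurd (Finset.mem_univ i) hi
    exact Finset.sum_congr rfl fun i _ => h1 i
  -- symmetry
  have hPQsym : (P - Q)ᵀ = P - Q := by
    rw [hP, hQ]
    simp [Matrix.transpose_sub, Matrix.transpose_mul, Matrix.diagonal_transpose,
      Matrix.transpose_transpose, Matrix.mul_assoc]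
  have hABsym : (A - B)ᵀ = A - B := by
    rw [hA, hB]
    simp [Matrix.transpose_sub, Matrix.transpose_mul, Matrix.diagonal_transpose,
      Matrix.transpose_transpose, Matrix.mul_assoc]
  -- the quantity T
  set T := ∑ i, ∑ j, chi M i * (1 - chi M j) * (G i j)^2 with hTdef
  have hT0 : 0 ≤ T := by
    rw [hTdef]
    apply Finset.sum_nonneg; intro i _; apply Finset.sum_nonneg; intro j _
    have h1 := chi_nonneg M i
    have h2 := chi_le_one M j
    have h3 := sq_nonneg (G i j)
    exact mul_nonneg (mul_nonneg h1 (by linarith)) h3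
  have hTrows := dk_rows (M := M) (fun i j => (G i j)^2) hrow
  have hTcols := dk_cols (M := M) (fun i j => (G i j)^2) hcol
  -- Frobenius norm of P - Q
  have hfrob : frob2 (P - Q) = 2 * T := by
    rw [dk_frob2_trace _ hPQsym]
    have expand : (P - Q) * (P - Q) = P*P - P*Q - (Q*P - Q*Q) := by
      rw [Matrix.sub_mul, Matrix.mul_sub, Matrix.mul_sub]
    rw [expand, Matrix.trace_sub, Matrix.trace_sub, Matrix.trace_sub,
      Matrix.trace_mul_comm Q P, trPP, trQQ, trPQ]
    rw [hTdef] at *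
    linarith [hTrows]
  -- lower bound on the trace inner product
  have hsplit : Matrix.trace ((A - B) * (P - Q))
      = Matrix.trace (A*P) - Matrix.trace (A*Q) - Matrix.trace (B*P) + Matrix.trace (B*Q) := by
    rw [Matrix.sub_mul, Matrix.mul_sub, Matrix.mul_sub, Matrix.trace_sub, Matrix.trace_sub,
      Matrix.trace_sub]
    ring
  have hkeyA := dk_key hM1 hMd ν hν (fun i j => (G i j)^2) (fun i j => sq_nonneg _) hrow hcol
  have hkeyB := dk_key hM1 hMd μ hμ (fun i j => (G j i)^2) (fun i j => sq_nonneg _) hrow' hcol'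
  have hν12 : 0 ≤ ν ⟨M - 1, lt_trans (Nat.sub_lt hM1 one_pos) hMd⟩ - ν ⟨M, hMd⟩ := by
    have : (⟨M - 1, lt_trans (Nat.sub_lt hM1 one_pos) hMd⟩ : Fin d) ≤ ⟨M, hMd⟩ :=
      Fin.mk_le_mk.mpr (by omega)
    linarith [hν this]
  have hAgood : 0 ≤ Matrix.trace (A*P) - Matrix.trace (A*Q) := by
    rw [trAP, trAQ]
    have hT0' : 0 ≤ ∑ i, ∑ j, chi M i * (1 - chi M j) * (G i j)^2 := by
      rw [← hTdef]; exact hT0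
    nlinarith [hkeyA, mul_nonneg hν12 hT0']
  have hT'eq : ∑ i, ∑ j, chi M i * (1 - chi M j) * (G j i)^2
      = ∑ i, ∑ j, (1 - chi M i) * chi M j * (G i j)^2 := by
    rw [Finset.sum_comm]
    apply Finset.sum_congr rfl; intro i _; apply Finset.sum_congr rfl; intro j _; ring
  have hBgood : δ * T ≤ Matrix.trace (B*Q) - Matrix.trace (B*P) := by
    rw [trBQ, trBP]
    have h1 : ∑ i, ∑ j, chi M i * (1 - chi M j) * (G j i)^2 = T := by
      rw [hT'eq, hTdef]
      have := hTcols
      have := hTrows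
      linarith
    rw [h1] at hkeyB
    rw [hδ] at *
    linarith [hkeyB]
  have htrace_ge : δ * T ≤ Matrix.trace ((A - B) * (P - Q)) := by
    rw [hsplit]; linarith
  -- Cauchy-Schwarz
  have hcs : (Matrix.trace ((A - B) * (P - Q)))^2 ≤ frob2 (A - B) * frob2 (P - Q) := by
    rw [dk_trace_symm _ _ hPQsym]
    exact dk_cs _ _
  -- final numeric computation
  set x := Real.sqrt (frob2 (P - Q)) with hx
  set nE := Real.sqrt (frob2 (A - B)) with hnE
  have hx0 : 0 ≤ x := Real.sqrt_nonneg _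
  have hnE0 : 0 ≤ nE := Real.sqrt_nonneg _
  have hx2 : x^2 = frob2 (P - Q) := Real.sq_sqrt (dk_frob2_nonneg _)
  have htr_le : Matrix.trace ((A - B) * (P - Q)) ≤ nE * x := by
    have h1 := le_abs_self (Matrix.trace ((A - B) * (P - Q)))
    have h2 := (Real.sqrt_sq_eq_abs (Matrix.trace ((A - B) * (P - Q)))).symm
    have h3 : Real.sqrt ((Matrix.trace ((A - B) * (P - Q)))^2)
        ≤ Real.sqrt (frob2 (A - B) * frob2 (P - Q)) := Real.sqrt_le_sqrt hcs
    rw [Real.sqrt_mul (dk_frob2_nonneg _)] at h3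
    rw [hx, hnE]
    linarith
  have hmain : δ * x^2 ≤ 2 * (nE * x) := by
    rw [hx2, hfrob]
    linarith
  have hs2 : (1:ℝ) ≤ Real.sqrt 2 := by
    rw [show (1:ℝ) = Real.sqrt 1 by simp]
    exact Real.sqrt_le_sqrt (by norm_num)
  rcases eq_or_lt_of_le hx0 with h | h
  · rw [← h]
    positivity
  · rw [div_mul_eq_mul_div, le_div_iff₀ hgap]
    have hdx : δ * x ≤ 2 * nE := by
      have h' : δ * x * x ≤ 2 * nE * x := by nlinarith
      exact le_of_mul_le_mul_right h' h
    nlinarith
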